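/- Let Ω be finite, ℓ > 0, and let u_{n,0}, …, u_{n,n} be functions vanishing outside Ω° satisfying for each i ≥ 1 the variational inequality ∑_{Ω°}((u_{n,i}−u_{n,i−1})/ℓ)(v−u_{n,i})μ ≥ ∑_{Ω°}(Δu_{n,i}+f_{n,i})(v−u_{n,i})μ for all v vanishing outside Ω°. Then for all j ≥ 2, ‖(u_{n,j}−u_{n,j−1})/ℓ‖_{L²(Ω°)} ≤ ‖(u_{n,j−1}−u_{n,j−2})/ℓ‖_{L²(Ω°)} + ‖f_{n,j}−f_{n,j−1}‖_{L²(Ω°)}. -/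

import Mathlib

/-!
Put `z_i = (u_i - u_{i-1}) / ℓ` and `d = u_j - u_{j-1} = ℓ z_j`. Testing the variational
inequality of step `j` with `u_{j-1}` and that of step `j - 1` with `u_j` and adding gives
`⟨z_j - z_{j-1}, d⟩ ≤ ⟨Δd, d⟩ + ⟨f_j - f_{j-1}, d⟩` in `L²(Ω°, μ)`. By the discrete Green formula
`⟨Δd, d⟩ = -½ ∑ ω (d y - d x)² ≤ 0`, so after dividing by `ℓ`,
`‖z_j‖² ≤ ⟨z_{j-1} + f_j - f_{j-1}, z_j⟩`, and Cauchy–Schwarz finishes.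
-/

open Finset

section

variable {V : Type*}

theorem sum_mul_mul_le_sqrt_mul_sqrt (s : Finset V) (μ g h : V → ℝ) (hμ : ∀ x ∈ s, 0 ≤ μ x) :
    ∑ x ∈ s, g x * h x * μ x
      ≤ √(∑ x ∈ s, g x ^ 2 * μ x) * √(∑ x ∈ s, h x ^ 2 * μ x) := by
  refine (Real.le_sqrt_of_sq_le <| sum_sq_le_sum_mul_sum_of_sq_le_mul s
    (r := fun x => g x * h x * μ x) (f := fun x => g x ^ 2 * μ x) (g := fun x => h x ^ 2 * μ x)
    (fun x hx => mul_nonneg (sq_nonneg _) (hμ x hx))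
    (fun x hx => mul_nonneg (sq_nonneg _) (hμ x hx)) fun x _ => le_of_eq (by ring)).trans_eq ?_
  exact Real.sqrt_mul (sum_nonneg fun x hx => mul_nonneg (sq_nonneg _) (hμ x hx)) _

theorem sum_sum_mul_sub_mul_self_nonpos (T : Finset V) (e : V → V → ℝ)
    (he : ∀ x y, e x y = e y x) (he0 : ∀ x y, 0 ≤ e x y) (w : V → ℝ) :
    ∑ x ∈ T, ∑ y ∈ T, e x y * (w y - w x) * w x ≤ 0 := by
  have hsymm : ∑ x ∈ T, ∑ y ∈ T, e x y * (w y - w x) * w x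
      = ∑ x ∈ T, ∑ y ∈ T, e x y * (w x - w y) * w y := by
    rw [sum_comm]
    simp only [he]
  have hsq : 2 * ∑ x ∈ T, ∑ y ∈ T, e x y * (w y - w x) * w x
      = -∑ x ∈ T, ∑ y ∈ T, e x y * (w y - w x) ^ 2 := by
    rw [two_mul]
    nth_rewrite 2 [hsymm]
    simp only [← sum_add_distrib, ← sum_neg_distrib]
    exact sum_congr rfl fun x _ => sum_congr rfl fun y _ => by ring
  have : 0 ≤ ∑ x ∈ T, ∑ y ∈ T, e x y * (w y - w x) ^ 2 :=
    sum_nonneg fun x _ => sum_nonneg fun y _ => mul_nonneg (he0 x y) (sq_nonneg _)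
  linarith

theorem sum_sum_neighbors_mul_sub_mul_self_nonpos (N : V → Finset V)
    (hN : ∀ x y, x ∈ N y ↔ y ∈ N x) (ω : V → V → ℝ) (hω : ∀ x, ∀ y ∈ N x, 0 ≤ ω x y)
    (hωsymm : ∀ x y, ω x y = ω y x) (s : Finset V) (w : V → ℝ) (hw : ∀ x ∉ s, w x = 0) :
    ∑ x ∈ s, (∑ y ∈ N x, ω x y * (w y - w x)) * w x ≤ 0 := by
  classical
  let T := s ∪ s.biUnion N
  -- extending `ω` by zero off the edges gives a kernel that is symmetric on all of `V`
  let e : V → V → ℝ := fun x y => if y ∈ N x then ω x y else 0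
  have hN_sub : ∀ x ∈ s, N x ⊆ T := fun x hx y hy =>
    subset_union_right (mem_biUnion.mpr ⟨x, hx, hy⟩)
  have hextend : ∀ x ∈ s, ∑ y ∈ N x, ω x y * (w y - w x) = ∑ y ∈ T, e x y * (w y - w x) := by
    intro x hx
    rw [← sum_subset (hN_sub x hx) fun y _ hy => by simp [e, hy]]
    exact sum_congr rfl fun y hy => by simp [e, hy]
  calc ∑ x ∈ s, (∑ y ∈ N x, ω x y * (w y - w x)) * w x
      = ∑ x ∈ T, ∑ y ∈ T, e x y * (w y - w x) * w x := by
        rw [← sum_subset subset_union_left fun x _ hx => by simp [hw x hx]]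
        exact sum_congr rfl fun x hx => by rw [hextend x hx, sum_mul]
    _ ≤ 0 := by
        refine sum_sum_mul_sub_mul_self_nonpos T e (fun x y => ?_) (fun x y => ?_) w
        · simp only [e, hN x y, hωsymm x y]
        · by_cases hy : y ∈ N x
          · simpa [e, hy] using hω x y hy
          · simp [e, hy]

noncomputable def graphLaplacian (N : V → Finset V) (ω : V → V → ℝ) (μ w : V → ℝ) (x : V) : ℝ :=
  1 / μ x * ∑ y ∈ N x, ω x y * (w y - w x)

section graphLaplacian

variable (N : V → Finset V) (ω : V → V → ℝ) (μ : V → ℝ)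

theorem graphLaplacian_sub (a b : V → ℝ) (x : V) :
    graphLaplacian N ω μ (a - b) x = graphLaplacian N ω μ a x - graphLaplacian N ω μ b x := by
  simp only [graphLaplacian, Pi.sub_apply, ← mul_sub, ← sum_sub_distrib]
  exact congrArg _ (sum_congr rfl fun y _ => by ring)

theorem sum_graphLaplacian_mul_self_mul_nonpos (hN : ∀ x y, x ∈ N y ↔ y ∈ N x)
    (hω : ∀ x, ∀ y ∈ N x, 0 ≤ ω x y) (hωsymm : ∀ x y, ω x y = ω y x) (s : Finset V)
    (hμ : ∀ x ∈ s, μ x ≠ 0) (w : V → ℝ) (hw : ∀ x ∉ s, w x = 0) :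
    ∑ x ∈ s, graphLaplacian N ω μ w x * w x * μ x ≤ 0 := by
  calc ∑ x ∈ s, graphLaplacian N ω μ w x * w x * μ x
      = ∑ x ∈ s, (∑ y ∈ N x, ω x y * (w y - w x)) * w x :=
        sum_congr rfl fun x hx => by simp only [graphLaplacian]; field_simp [hμ x hx]
    _ ≤ 0 := sum_sum_neighbors_mul_sub_mul_self_nonpos N hN ω hω hωsymm s w hw

theorem sum_sub_mul_sub_mul_le_of_variational_inequalities (hN : ∀ x y, x ∈ N y ↔ y ∈ N x)
    (hω : ∀ x, ∀ y ∈ N x, 0 ≤ ω x y) (hωsymm : ∀ x y, ω x y = ω y x) (s : Finset V)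
    (hμ : ∀ x ∈ s, μ x ≠ 0) (a b fa fb ta tb : V → ℝ) (hab : ∀ x ∉ s, a x = b x)
    (ha : ∑ x ∈ s, (graphLaplacian N ω μ a x + fa x) * (b x - a x) * μ x
      ≤ ∑ x ∈ s, ta x * (b x - a x) * μ x)
    (hb : ∑ x ∈ s, (graphLaplacian N ω μ b x + fb x) * (a x - b x) * μ x
      ≤ ∑ x ∈ s, tb x * (a x - b x) * μ x) :
    ∑ x ∈ s, (ta x - tb x) * (a x - b x) * μ x ≤ ∑ x ∈ s, (fa x - fb x) * (a x - b x) * μ x := by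
  have hgreen := sum_graphLaplacian_mul_self_mul_nonpos N ω μ hN hω hωsymm s hμ (a - b)
    fun x hx => sub_eq_zero.mpr (hab x hx)
  rw [← sub_nonpos, ← sum_sub_distrib]
  calc ∑ x ∈ s, ((ta x - tb x) * (a x - b x) * μ x - (fa x - fb x) * (a x - b x) * μ x)
      = ∑ x ∈ s, (graphLaplacian N ω μ (a - b) x * (a - b) x * μ x)
        + (∑ x ∈ s, (graphLaplacian N ω μ a x + fa x) * (b x - a x) * μ x
          - ∑ x ∈ s, ta x * (b x - a x) * μ x)
        + (∑ x ∈ s, (graphLaplacian N ω μ b x + fb x) * (a x - b x) * μ x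
          - ∑ x ∈ s, tb x * (a x - b x) * μ x) := by
        simp only [← sum_sub_distrib, ← sum_add_distrib, graphLaplacian_sub, Pi.sub_apply]
        exact sum_congr rfl fun x _ => by ring
    _ ≤ 0 := by linarith

end graphLaplacian

theorem sqrt_sum_sq_mul_le_add_of_sum_sub_mul_mul_le (s : Finset V) (μ z z' g : V → ℝ)
    (hμ : ∀ x ∈ s, 0 ≤ μ x)
    (h : ∑ x ∈ s, (z x - z' x) * z x * μ x ≤ ∑ x ∈ s, g x * z x * μ x) :
    √(∑ x ∈ s, z x ^ 2 * μ x) ≤ √(∑ x ∈ s, z' x ^ 2 * μ x) + √(∑ x ∈ s, g x ^ 2 * μ x) := by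
  set A := √(∑ x ∈ s, z x ^ 2 * μ x)
  set B := √(∑ x ∈ s, z' x ^ 2 * μ x)
  set C := √(∑ x ∈ s, g x ^ 2 * μ x)
  have hA : A ^ 2 ≤ (B + C) * A :=
    calc A ^ 2 = ∑ x ∈ s, (z x - z' x) * z x * μ x + ∑ x ∈ s, z' x * z x * μ x := by
          rw [Real.sq_sqrt (sum_nonneg fun x hx => mul_nonneg (sq_nonneg _) (hμ x hx)),
            ← sum_add_distrib]
          exact sum_congr rfl fun x _ => by ring
      _ ≤ C * A + B * A := add_le_add (h.trans (sum_mul_mul_le_sqrt_mul_sqrt s μ g z hμ))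
          (sum_mul_mul_le_sqrt_mul_sqrt s μ z' z hμ)
      _ = (B + C) * A := by ring
  nlinarith [Real.sqrt_nonneg (∑ x ∈ s, z x ^ 2 * μ x), Real.sqrt_nonneg (∑ x ∈ s, z' x ^ 2 * μ x),
    Real.sqrt_nonneg (∑ x ∈ s, g x ^ 2 * μ x)]

end

/-- Recursive estimate for the discrete time derivatives in Rothe's scheme for the
parabolic variational inequality: if `u_{n,0}, …, u_{n,n}` vanish outside `Ω°` and satisfy
the variational inequalities, then for `2 ≤ j ≤ n`,
`‖(u_{n,j}−u_{n,j−1})/ℓ‖_{L²} ≤ ‖(u_{n,j−1}−u_{n,j−2})/ℓ‖_{L²} + ‖f_{n,j}−f_{n,j−1}‖_{L²}`. -/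
theorem rothe_recursive_estimate {V : Type*}
    (N : V → Finset V) (hNsym : ∀ x y, x ∈ N y ↔ y ∈ N x)
    (ω : V → V → ℝ) (hωpos : ∀ x, ∀ y ∈ N x, 0 < ω x y)
    (hωsym : ∀ x y, ω x y = ω y x)
    (μ : V → ℝ) (hμ : ∀ x, 0 < μ x)
    (int : Finset V) (ℓ : ℝ) (hℓ : 0 < ℓ) (n : ℕ)
    (u f : ℕ → V → ℝ)
    (h0 : ∀ i ≤ n, ∀ x ∉ int, u i x = 0)
    (hVI : ∀ i, 1 ≤ i → i ≤ n → ∀ v : V → ℝ, (∀ x ∉ int, v x = 0) →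
      ∑ x ∈ int, (((1 / μ x) * ∑ y ∈ N x, ω x y * (u i y - u i x)) + f i x)
          * (v x - u i x) * μ x
        ≤ ∑ x ∈ int, ((u i x - u (i - 1) x) / ℓ) * (v x - u i x) * μ x) :
    ∀ j, 2 ≤ j → j ≤ n →
      Real.sqrt (∑ x ∈ int, ((u j x - u (j - 1) x) / ℓ) ^ 2 * μ x)
        ≤ Real.sqrt (∑ x ∈ int, ((u (j - 1) x - u (j - 2) x) / ℓ) ^ 2 * μ x)
          + Real.sqrt (∑ x ∈ int, (f j x - f (j - 1) x) ^ 2 * μ x) := by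
  intro j hj2 hjn
  have hstep := sum_sub_mul_sub_mul_le_of_variational_inequalities N ω μ hNsym
    (fun x y hy => (hωpos x y hy).le) hωsym int (fun x _ => (hμ x).ne') (u j) (u (j - 1))
    (f j) (f (j - 1)) (fun x => (u j x - u (j - 1) x) / ℓ)
    (fun x => (u (j - 1) x - u (j - 2) x) / ℓ)
    (fun x hx => by rw [h0 j hjn x hx, h0 (j - 1) (by omega) x hx])
    (hVI j (by omega) hjn (u (j - 1)) (h0 (j - 1) (by omega)))
    (by simpa only [graphLaplacian, Nat.sub_sub, Nat.reduceAdd]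
      using hVI (j - 1) (by omega) (by omega) (u j) (h0 j hjn))
  have hscale : ∀ a : V → ℝ, ∑ x ∈ int, a x * (u j x - u (j - 1) x) * μ x
      = ℓ * ∑ x ∈ int, a x * ((u j x - u (j - 1) x) / ℓ) * μ x := fun a => by
    rw [mul_sum]
    exact sum_congr rfl fun x _ => by field_simp
  rw [hscale, hscale] at hstep
  exact sqrt_sum_sq_mul_le_add_of_sum_sub_mul_mul_le int μ _ _ _ (fun x _ => (hμ x).le)
    (le_of_mul_le_mul_left hstep hℓ)
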